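/- Let p ≤ −1 and let ν ∈ ℂ with Re(ν) < 0. Then, as x → +∞ through positive reals, F_{p,ν}(x) = Γ(−ν) x^ν + O(x^{Re(ν)+p}); i.e. F_{p,ν}(x) − Γ(−ν)x^ν is O(x^{Re(ν)+p}) as x → +∞. -/

import Mathlib

open MeasureTheory Set Filter Asymptotics

/-!
The substitution `t ↦ t⁻¹` turns `∫ t ^ (ν - 1) * exp (-x / t)` into a Gamma integral, so the
integral without the factor `exp (-t ^ p)` is exactly `Γ(-ν) x ^ ν`. Since
`|exp (-t ^ p) - 1| ≤ t ^ p`, the error is bounded by the same integral with `ν` replaced by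
`Re ν + p`, namely `Γ(-(Re ν + p)) x ^ (Re ν + p)`; it converges because `p ≤ -1` makes
`Re ν + p` negative.
-/

section InvSubstitution

variable {E : Type*} [NormedAddCommGroup E] [NormedSpace ℝ E]

theorem integral_comp_inv_Ioi (g : ℝ → E) :
    ∫ t in Ioi 0, t ^ (-2 : ℝ) • g t⁻¹ = ∫ u in Ioi 0, g u := by
  rw [← integral_comp_rpow_Ioi g (p := -1) (by norm_num)]
  refine setIntegral_congr_fun measurableSet_Ioi fun t _ => ?_
  norm_num [Real.rpow_neg_one]

theorem integrableOn_Ioi_comp_inv_iff (g : ℝ → E) :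
    IntegrableOn (fun t => t ^ (-2 : ℝ) • g t⁻¹) (Ioi 0) ↔ IntegrableOn g (Ioi 0) := by
  rw [← integrableOn_Ioi_comp_rpow_iff' g (p := -1) (by norm_num)]
  refine integrableOn_congr_fun (fun t _ => ?_) measurableSet_Ioi
  norm_num [Real.rpow_neg_one]

end InvSubstitution

theorem Real.rpow_neg_two_mul_inv_rpow {t : ℝ} (ht : 0 < t) (σ : ℝ) :
    t ^ (-2 : ℝ) * t⁻¹ ^ (-σ - 1) = t ^ (σ - 1) := by
  rw [Real.inv_rpow ht.le, ← Real.rpow_neg ht.le, ← Real.rpow_add ht]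
  ring_nf

theorem ofReal_rpow_neg_two_mul_inv_cpow {t : ℝ} (ht : 0 < t) (ν : ℂ) :
    ((t ^ (-2 : ℝ) : ℝ) : ℂ) * ((t⁻¹ : ℝ) : ℂ) ^ (-ν - 1) = (t : ℂ) ^ (ν - 1) := by
  have ht0 : (t : ℂ) ≠ 0 := by exact_mod_cast ht.ne'
  have harg : (t : ℂ).arg ≠ Real.pi := by
    rw [Complex.arg_ofReal_of_nonneg ht.le]; exact Real.pi_ne_zero.symm
  rw [Complex.ofReal_cpow ht.le, Complex.ofReal_inv, Complex.inv_cpow _ _ harg,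
    ← Complex.cpow_neg, ← Complex.cpow_add _ _ ht0]
  push_cast
  ring_nf

theorem integrableOn_rpow_mul_exp_neg_div {σ x : ℝ} (hσ : σ < 0) (hx : 0 < x) :
    IntegrableOn (fun t : ℝ => t ^ (σ - 1) * Real.exp (-(x / t))) (Ioi 0) := by
  have hg : IntegrableOn (fun u : ℝ => u ^ (-σ - 1) * Real.exp (-(x * u))) (Ioi 0) := by
    simpa using integrableOn_rpow_mul_exp_neg_mul_rpow (p := 1) (by linarith) one_pos hx
  refine ((integrableOn_Ioi_comp_inv_iff _).2 hg).congr_fun (fun t ht => ?_) measurableSet_Ioi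
  dsimp only
  rw [smul_eq_mul, ← mul_assoc, Real.rpow_neg_two_mul_inv_rpow ht, div_eq_mul_inv]

theorem integral_rpow_mul_exp_neg_div {σ x : ℝ} (hσ : σ < 0) (hx : 0 < x) :
    ∫ t in Ioi 0, t ^ (σ - 1) * Real.exp (-(x / t)) = Real.Gamma (-σ) * x ^ σ := by
  calc ∫ t in Ioi 0, t ^ (σ - 1) * Real.exp (-(x / t))
      = ∫ t in Ioi 0, t ^ (-2 : ℝ) • (t⁻¹ ^ (-σ - 1) * Real.exp (-(x * t⁻¹))) := by
        refine setIntegral_congr_fun measurableSet_Ioi fun t ht => ?_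
        rw [smul_eq_mul, ← mul_assoc, Real.rpow_neg_two_mul_inv_rpow ht, div_eq_mul_inv]
    _ = (1 / x) ^ (-σ) * Real.Gamma (-σ) := by
        rw [integral_comp_inv_Ioi (fun u => u ^ (-σ - 1) * Real.exp (-(x * u))),
          Real.integral_rpow_mul_exp_neg_mul_Ioi (by linarith) hx]
    _ = Real.Gamma (-σ) * x ^ σ := by
        rw [one_div, Real.inv_rpow hx.le, ← Real.rpow_neg hx.le, neg_neg, mul_comm]

theorem norm_cpow_mul_exp_neg_div {t : ℝ} (ht : 0 < t) (ν : ℂ) (x : ℝ) :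
    ‖(t : ℂ) ^ (ν - 1) * Complex.exp (-((x / t : ℝ) : ℂ))‖
      = t ^ (ν.re - 1) * Real.exp (-(x / t)) := by
  rw [norm_mul, Complex.norm_cpow_eq_rpow_re_of_pos ht, ← Complex.ofReal_neg,
    Complex.norm_exp_ofReal, Complex.sub_re, Complex.one_re]

theorem integrableOn_cpow_mul_exp_neg_div {ν : ℂ} (hν : ν.re < 0) {x : ℝ} (hx : 0 < x) :
    IntegrableOn (fun t : ℝ => (t : ℂ) ^ (ν - 1) * Complex.exp (-((x / t : ℝ) : ℂ)))
      (Ioi 0) := by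
  refine (integrable_norm_iff (by fun_prop)).1 ?_
  refine (integrableOn_rpow_mul_exp_neg_div hν hx).congr_fun (fun t ht => ?_) measurableSet_Ioi
  rw [norm_cpow_mul_exp_neg_div ht]

theorem integral_cpow_mul_exp_neg_div {ν : ℂ} (hν : ν.re < 0) {x : ℝ} (hx : 0 < x) :
    ∫ t in Ioi (0 : ℝ), (t : ℂ) ^ (ν - 1) * Complex.exp (-((x / t : ℝ) : ℂ))
      = Complex.Gamma (-ν) * (x : ℂ) ^ ν := by
  have harg : (x : ℂ).arg ≠ Real.pi := by
    rw [Complex.arg_ofReal_of_nonneg hx.le]; exact Real.pi_ne_zero.symm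
  calc ∫ t in Ioi (0 : ℝ), (t : ℂ) ^ (ν - 1) * Complex.exp (-((x / t : ℝ) : ℂ))
      = ∫ t in Ioi (0 : ℝ), t ^ (-2 : ℝ) •
          (((t⁻¹ : ℝ) : ℂ) ^ (-ν - 1) * Complex.exp (-((x : ℂ) * ((t⁻¹ : ℝ) : ℂ)))) := by
        refine setIntegral_congr_fun measurableSet_Ioi fun t ht => ?_
        rw [Complex.real_smul, ← mul_assoc, ofReal_rpow_neg_two_mul_inv_cpow ht, div_eq_mul_inv,
          Complex.ofReal_mul]
    _ = (1 / (x : ℂ)) ^ (-ν) * Complex.Gamma (-ν) := by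
        rw [integral_comp_inv_Ioi (fun u : ℝ => (u : ℂ) ^ (-ν - 1) * Complex.exp (-(x * u))),
          Complex.integral_cpow_mul_exp_neg_mul_Ioi (by simpa using hν) hx]
    _ = Complex.Gamma (-ν) * (x : ℂ) ^ ν := by
        rw [one_div, Complex.inv_cpow _ _ harg, ← Complex.cpow_neg, neg_neg, mul_comm]

theorem Real.abs_exp_neg_sub_one_le {a : ℝ} (ha : 0 ≤ a) : |Real.exp (-a) - 1| ≤ a := by
  rw [abs_of_nonpos (by simpa using ha)]
  linarith [Real.one_sub_le_exp_neg a]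

theorem integrableOn_cpow_mul_exp_neg_rpow_sub_div {ν : ℂ} (hν : ν.re < 0) (p : ℝ) {x : ℝ}
    (hx : 0 < x) :
    IntegrableOn (fun t : ℝ => (t : ℂ) ^ (ν - 1)
      * Complex.exp (-((t ^ p : ℝ) : ℂ) - ((x / t : ℝ) : ℂ))) (Ioi 0) := by
  refine Integrable.mono (integrableOn_cpow_mul_exp_neg_div hν hx) (by fun_prop) <|
    (ae_restrict_iff' measurableSet_Ioi).2 <| .of_forall fun t ht => ?_
  rw [sub_eq_add_neg (-_), Complex.exp_add, mul_left_comm, norm_mul (Complex.exp _),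
    ← Complex.ofReal_neg, Complex.norm_exp_ofReal]
  exact mul_le_of_le_one_left (norm_nonneg _) <|
    Real.exp_le_one_iff.2 (neg_nonpos.2 (Real.rpow_nonneg (le_of_lt ht) p))

theorem norm_cpow_mul_exp_neg_rpow_sub_div_sub_le {t : ℝ} (ht : 0 < t) (ν : ℂ) (p x : ℝ) :
    ‖(t : ℂ) ^ (ν - 1) * Complex.exp (-((t ^ p : ℝ) : ℂ) - ((x / t : ℝ) : ℂ))
        - (t : ℂ) ^ (ν - 1) * Complex.exp (-((x / t : ℝ) : ℂ))‖
      ≤ t ^ (ν.re + p - 1) * Real.exp (-(x / t)) := by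
  have hfactor : (t : ℂ) ^ (ν - 1) * Complex.exp (-((t ^ p : ℝ) : ℂ) - ((x / t : ℝ) : ℂ))
        - (t : ℂ) ^ (ν - 1) * Complex.exp (-((x / t : ℝ) : ℂ))
      = ((Real.exp (-t ^ p) - 1 : ℝ) : ℂ)
        * ((t : ℂ) ^ (ν - 1) * Complex.exp (-((x / t : ℝ) : ℂ))) := by
    rw [sub_eq_add_neg (-_), Complex.exp_add]
    push_cast
    ring
  calc _ = |Real.exp (-t ^ p) - 1| * (t ^ (ν.re - 1) * Real.exp (-(x / t))) := by
        rw [hfactor, norm_mul, norm_cpow_mul_exp_neg_div ht, Complex.norm_real, Real.norm_eq_abs]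
    _ ≤ t ^ p * (t ^ (ν.re - 1) * Real.exp (-(x / t))) := by
        gcongr
        exact Real.abs_exp_neg_sub_one_le (by positivity)
    _ = t ^ (ν.re + p - 1) * Real.exp (-(x / t)) := by
        rw [← mul_assoc, ← Real.rpow_add ht]
        ring_nf

/-- For `p ≤ -1` and `Re ν < 0`, as `x → +∞`:
`F_{p,ν}(x) = Γ(-ν) x^ν + O(x^{Re ν + p})`. -/
theorem kratzel_asymptotics_p_le_neg_one (p : ℝ) (hp : p ≤ -1)
    (ν : ℂ) (hν : ν.re < 0) :
    (fun x : ℝ =>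
      (∫ t in Ioi (0 : ℝ), (t : ℂ) ^ (ν - 1)
          * Complex.exp (-((t ^ p : ℝ) : ℂ) - ((x / t : ℝ) : ℂ)))
        - Complex.Gamma (-ν) * (x : ℂ) ^ ν)
      =O[atTop] (fun x : ℝ => x ^ (ν.re + p)) := by
  have hσ : ν.re + p < 0 := by linarith
  refine isBigO_iff.2 ⟨Real.Gamma (-(ν.re + p)), ?_⟩
  filter_upwards [eventually_gt_atTop 0] with x hx
  rw [← integral_cpow_mul_exp_neg_div hν hx,
    ← integral_sub (integrableOn_cpow_mul_exp_neg_rpow_sub_div hν p hx)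
      (integrableOn_cpow_mul_exp_neg_div hν hx),
    Real.norm_of_nonneg (by positivity), ← integral_rpow_mul_exp_neg_div hσ hx]
  exact norm_integral_le_of_norm_le (integrableOn_rpow_mul_exp_neg_div hσ hx) <|
    (ae_restrict_iff' measurableSet_Ioi).2 <| .of_forall fun t ht =>
      norm_cpow_mul_exp_neg_rpow_sub_div_sub_le ht ν p x
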